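/- Let A, B be real numbers and C a smooth function of (x,y). If the linear bivector with brackets {x,y} = z, {y,z} = A·(C_x(p)·x + C_y(p)·y + z), {z,x} = B·(C_x(p)·x + C_y(p)·y + z) satisfies the Jacobi identity (where C_x(p), C_y(p) are fixed real constants), then A·C_y(p) = B·C_x(p). -/
import Mathlib

noncomputable def pdx (F : ℝ × ℝ × ℝ → ℝ) (p : ℝ × ℝ × ℝ) : ℝ := fderiv ℝ F p (1, 0, 0)
noncomputable def pdy (F : ℝ × ℝ × ℝ → ℝ) (p : ℝ × ℝ × ℝ) : ℝ := fderiv ℝ F p (0, 1, 0)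
noncomputable def pdz (F : ℝ × ℝ × ℝ → ℝ) (p : ℝ × ℝ × ℝ) : ℝ := fderiv ℝ F p (0, 0, 1)

noncomputable def jacobiExpr (B C D : ℝ × ℝ × ℝ → ℝ) (p : ℝ × ℝ × ℝ) : ℝ :=
  B p * (pdx D p - pdy C p) + C p * (pdy B p - pdz D p) + D p * (pdz C p - pdx B p)

noncomputable def pdx2 (f : ℝ × ℝ → ℝ) (q : ℝ × ℝ) : ℝ := fderiv ℝ f q (1, 0)
noncomputable def pdy2 (f : ℝ × ℝ → ℝ) (q : ℝ × ℝ) : ℝ := fderiv ℝ f q (0, 1)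

noncomputable def curl (B C D : ℝ × ℝ × ℝ → ℝ) (p : ℝ × ℝ × ℝ) : ℝ × ℝ × ℝ :=
  (pdy B p - pdz D p, pdz C p - pdx B p, pdx D p - pdy C p)

noncomputable def Lmap (k c₁ c₂ : ℝ) : (ℝ × ℝ × ℝ) →L[ℝ] ℝ :=
  k • (c₁ • (ContinuousLinearMap.fst ℝ ℝ (ℝ × ℝ)) +
    c₂ • ((ContinuousLinearMap.fst ℝ ℝ ℝ).comp (ContinuousLinearMap.snd ℝ ℝ (ℝ × ℝ))) +
    (ContinuousLinearMap.snd ℝ ℝ ℝ).comp (ContinuousLinearMap.snd ℝ ℝ (ℝ × ℝ)))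

lemma key (k c₁ c₂ : ℝ) (q v : ℝ × ℝ × ℝ) :
    fderiv ℝ (fun r : ℝ × ℝ × ℝ => k * (c₁ * r.1 + c₂ * r.2.1 + r.2.2)) q v
      = k * (c₁ * v.1 + c₂ * v.2.1 + v.2.2) := by
  have h : (fun r : ℝ × ℝ × ℝ => k * (c₁ * r.1 + c₂ * r.2.1 + r.2.2)) = ⇑(Lmap k c₁ c₂) := by
    funext r
    simp [Lmap, smul_eq_mul]; ring
  rw [h, ContinuousLinearMap.fderiv]
  simp [Lmap, smul_eq_mul]; ring

theorem stmt_12 (A B : ℝ) (C : ℝ × ℝ → ℝ) (hC : ContDiff ℝ (⊤ : ℕ∞) C) (p : ℝ × ℝ)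
    (c₁ c₂ : ℝ) (hc₁ : c₁ = pdx2 C p) (hc₂ : c₂ = pdy2 C p)
    (hjac : ∀ q : ℝ × ℝ × ℝ,
      jacobiExpr (fun r => r.2.2)
        (fun r => A * (c₁ * r.1 + c₂ * r.2.1 + r.2.2))
        (fun r => B * (c₁ * r.1 + c₂ * r.2.1 + r.2.2)) q = 0) :
    A * c₂ = B * c₁ := by
  have hz : ∀ (q v : ℝ × ℝ × ℝ),
      fderiv ℝ (fun r : ℝ × ℝ × ℝ => r.2.2) q v = v.2.2 := by
    intro q v
    have h : (fun r : ℝ × ℝ × ℝ => r.2.2)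
        = ⇑((ContinuousLinearMap.snd ℝ ℝ ℝ).comp (ContinuousLinearMap.snd ℝ ℝ (ℝ × ℝ))) := rfl
    rw [h, ContinuousLinearMap.fderiv]
    rfl
  have := hjac (0, 0, 1)
  simp only [jacobiExpr, pdx, pdy, pdz, key, hz] at this
  norm_num at this
  linarith
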